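/- For any odd prime p and positive integer k, every faithful action of the dihedral group D_{2p^k} of order 4p^k on a finite set has base size at most 3. -/

import Mathlib

/-!
Let `z = r ^ (2 p ^ (k - 1))`, a rotation of order `p`, and let `x` be a point moved by `z`.
Any rotation other than `1` and the central involution `r ^ (p ^ k)` generates a subgroup
containing `z`, so it does not fix `x`; as the product of two reflections is a rotation, at most
two reflections fix `x` either, and `|G_x| ≤ 4`. In a faithful action every point moved by a
nontrivial element of a pointwise stabilizer at least halves it, so two further points complete
`{x}` to a base.
-/

/-- A base for the action of `G` on `S`: a set whose pointwise stabilizer is trivial. -/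
def IsBase (G : Type*) {S : Type*} [Group G] [MulAction G S] (B : Set S) : Prop :=
  ∀ g : G, (∀ x ∈ B, g • x = x) → g = 1

/-- The base size: minimal cardinality of a base. -/
noncomputable def baseSize (G S : Type*) [Group G] [MulAction G S] : ℕ :=
  sInf {n | ∃ B : Finset S, IsBase G (B : Set S) ∧ B.card = n}

open MulAction

section Base

variable {G S : Type*} [Group G] [MulAction G S]

theorem baseSize_le_card {B : Finset S} (hB : IsBase G (B : Set S)) : baseSize G S ≤ B.card :=
  Nat.sInf_le ⟨B, hB, rfl⟩

variable [FaithfulSMul G S]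

theorem exists_smul_ne_of_ne_one {g : G} (hg : g ≠ 1) : ∃ x : S, g • x ≠ x := by
  by_contra! h
  exact hg (eq_of_smul_eq_smul fun x => by rw [h x, one_smul])

theorem Subgroup.exists_finset_card_le_of_card_le_two_pow (H : Subgroup G) [Finite H] {m : ℕ}
    (hH : Nat.card H ≤ 2 ^ m) :
    ∃ T : Finset S, T.card ≤ m ∧ ∀ h ∈ H, (∀ y ∈ T, h • y = y) → h = 1 := by
  classical
  induction m generalizing H with
  | zero =>
    have hbot : H = ⊥ := H.card_le_one_iff_eq_bot.mp hH
    exact ⟨∅, le_rfl, fun h hh _ => by rwa [hbot, Subgroup.mem_bot] at hh⟩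
  | succ m ih =>
    obtain rfl | ⟨g, hgH, hg1⟩ := H.bot_or_exists_ne_one
    · exact ⟨∅, Nat.zero_le _, fun h hh _ => Subgroup.mem_bot.mp hh⟩
    obtain ⟨y, hy⟩ := exists_smul_ne_of_ne_one (S := S) hg1
    set K := H ⊓ stabilizer G y
    have hKH : K ≤ H := inf_le_left
    have : Finite K := Finite.of_injective _ (Subgroup.inclusion_injective hKH)
    have hKne : Nat.card K ≠ Nat.card H := fun h =>
      hy (Subgroup.mem_inf.mp ((Subgroup.eq_of_le_of_card_ge hKH h.ge).symm ▸ hgH : g ∈ K)).2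
    have hK : Nat.card K ≤ 2 ^ m := by
      obtain ⟨d, hd⟩ := Subgroup.card_dvd_of_le hKH
      have hd2 : 2 ≤ d := by
        rcases d with _ | _ | d
        · exact absurd (hd.trans (mul_zero _)) Nat.card_pos.ne'
        · exact absurd (hd.trans (mul_one _)).symm hKne
        · omega
      rw [pow_succ] at hH
      nlinarith
    obtain ⟨T, hTm, hT⟩ := ih K hK
    refine ⟨insert y T, (Finset.card_insert_le y T).trans (by omega), fun h hh hfix => ?_⟩
    refine hT h (Subgroup.mem_inf.mpr ⟨hh, hfix y (Finset.mem_insert_self y T)⟩) fun z hz => ?_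
    exact hfix z (Finset.mem_insert_of_mem hz)

theorem baseSize_le_of_card_stabilizer_le (x : S) [Finite (stabilizer G x)] {m : ℕ}
    (hx : Nat.card (stabilizer G x) ≤ 2 ^ m) : baseSize G S ≤ m + 1 := by
  classical
  obtain ⟨T, hTm, hT⟩ := (stabilizer G x).exists_finset_card_le_of_card_le_two_pow (S := S) hx
  have hB : IsBase G ((insert x T : Finset S) : Set S) := fun g hg =>
    hT g (hg x (by simp)) fun y hy => hg y (by simp [hy])
  exact (baseSize_le_card hB).trans ((Finset.card_insert_le x T).trans (by omega))

end Base

theorem Nat.dvd_mul_pow_pred_of_dvd_mul_pow {a d p k : ℕ} (hp : p.Prime) (hd : d ∣ a * p ^ k)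
    (hpk : ¬ p ^ k ∣ d) : d ∣ a * p ^ (k - 1) := by
  obtain ⟨j, hjk, hj⟩ := (Nat.dvd_prime_pow hp).mp (Nat.gcd_dvd_right d (p ^ k))
  have hjk' : j ≤ k - 1 := by
    by_contra! h
    exact hpk (by simpa [show j = k by omega, hj] using Nat.gcd_dvd_left d (p ^ k))
  calc d ∣ d.gcd a * d.gcd (p ^ k) := Nat.dvd_gcd_mul_gcd_iff_dvd_mul.mpr hd
    _ ∣ a * p ^ (k - 1) := mul_dvd_mul (Nat.gcd_dvd_right d a) (hj ▸ pow_dvd_pow p hjk')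

-- The witness comes from `ZMod.mul_inv_eq_gcd`: `j * j⁻¹ = gcd j.val (a * p ^ k)`.
theorem ZMod.exists_mul_eq_of_not_dvd_val {a p k : ℕ} (hp : p.Prime) {j : ZMod (a * p ^ k)}
    (hj : ¬ p ^ k ∣ j.val) : ∃ c : ZMod (a * p ^ k), j * c = ((a * p ^ (k - 1) : ℕ) : ZMod _) := by
  obtain ⟨m, hm⟩ := Nat.dvd_mul_pow_pred_of_dvd_mul_pow hp (Nat.gcd_dvd_right j.val _)
    fun h => hj (h.trans (Nat.gcd_dvd_left _ _))
  exact ⟨j⁻¹ * m, by rw [← mul_assoc, ZMod.mul_inv_eq_gcd, hm, Nat.cast_mul]⟩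

theorem ZMod.eq_zero_or_eq_of_dvd_val {m : ℕ} [NeZero m] {j : ZMod (2 * m)} (h : m ∣ j.val) :
    j = 0 ∨ j = m := by
  obtain ⟨c, hc⟩ := h
  have hc2 : c < 2 := by
    have := ZMod.val_lt j
    nlinarith [Nat.pos_of_neZero m]
  rw [← ZMod.natCast_zmod_val j, hc]
  interval_cases c <;> simp

namespace DihedralGroup

variable {p k : ℕ} {S : Type*} [MulAction (DihedralGroup (2 * p ^ k)) S]

theorem r_two_mul_pow_pred_ne_one (hp : p.Prime) (hk : 1 ≤ k) :
    r ((2 * p ^ (k - 1) : ℕ) : ZMod (2 * p ^ k)) ≠ 1 := by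
  rw [one_def, Ne, r.injEq, ZMod.natCast_eq_zero_iff]
  refine Nat.not_dvd_of_pos_of_lt (Nat.mul_pos two_pos (pow_pos hp.pos _)) ?_
  exact Nat.mul_lt_mul_of_pos_left (Nat.pow_lt_pow_right hp.one_lt (by omega)) two_pos

theorem eq_zero_or_eq_of_r_smul_eq (hp : p.Prime) {x : S}
    (hx : r ((2 * p ^ (k - 1) : ℕ) : ZMod (2 * p ^ k)) • x ≠ x) {j : ZMod (2 * p ^ k)}
    (hj : r j • x = x) : j = 0 ∨ j = (p ^ k : ℕ) := by
  have : NeZero p := ⟨hp.ne_zero⟩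
  refine ZMod.eq_zero_or_eq_of_dvd_val (by_contra fun hdvd => hx ?_)
  obtain ⟨c, hc⟩ := ZMod.exists_mul_eq_of_not_dvd_val hp hdvd
  have := (stabilizer _ x).pow_mem (mem_stabilizer_iff.mpr hj) c.val
  rwa [r_pow, ZMod.natCast_zmod_val, hc, mem_stabilizer_iff] at this

theorem exists_stabilizer_subset (hp : p.Prime) {x : S}
    (hx : r ((2 * p ^ (k - 1) : ℕ) : ZMod (2 * p ^ k)) • x ≠ x) :
    ∃ a : ZMod (2 * p ^ k), ∀ g ∈ stabilizer (DihedralGroup (2 * p ^ k)) x,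
      g ∈ ({1, r (p ^ k : ℕ), sr a, sr (a + ((p ^ k : ℕ) : ZMod (2 * p ^ k)))} : Finset _) := by
  have hrot {i : ZMod (2 * p ^ k)} (hi : r i • x = x) : r i = 1 ∨ r i = r (p ^ k : ℕ) :=
    (eq_zero_or_eq_of_r_smul_eq hp hx hi).imp (fun h => by rw [h, r_zero]) (congrArg r)
  have hrefl {a b : ZMod (2 * p ^ k)} (ha : sr a • x = x) (hb : sr b • x = x) :
      b = a ∨ b = a + ((p ^ k : ℕ) : ZMod (2 * p ^ k)) := by
    have hab : r (b - a) • x = x := by rw [← sr_mul_sr, mul_smul, hb, ha]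
    exact (eq_zero_or_eq_of_r_smul_eq hp hx hab).imp sub_eq_zero.mp
      fun h => by rw [← h, add_sub_cancel]
  by_cases hsr : ∃ a : ZMod (2 * p ^ k), sr a • x = x
  · obtain ⟨a, ha⟩ := hsr
    refine ⟨a, ?_⟩
    rintro (i | b) hg
    · rcases hrot hg with h | h <;> simp [h]
    · rcases hrefl ha hg with h | h <;> simp [h]
  · refine ⟨0, ?_⟩
    rintro (i | b) hg
    · rcases hrot hg with h | h <;> simp [h]
    · exact absurd ⟨b, hg⟩ hsr

theorem card_stabilizer_le_four (hp : p.Prime) {x : S}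
    (hx : r ((2 * p ^ (k - 1) : ℕ) : ZMod (2 * p ^ k)) • x ≠ x) :
    Nat.card (stabilizer (DihedralGroup (2 * p ^ k)) x) ≤ 4 := by
  obtain ⟨a, ha⟩ := exists_stabilizer_subset hp hx
  calc Nat.card (stabilizer (DihedralGroup (2 * p ^ k)) x)
      ≤ Nat.card (({1, r (p ^ k : ℕ), sr a, sr (a + ((p ^ k : ℕ) : ZMod (2 * p ^ k)))} :
          Finset _) : Set _) :=
        Nat.card_mono (Finset.finite_toSet _) fun g hg => ha g hg
    _ ≤ 4 := by rw [Nat.card_coe_set_eq, Set.ncard_coe_finset]; exact Finset.card_le_four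

end DihedralGroup

open DihedralGroup in
theorem stmt9_general (S : Type*) (p k : ℕ) (hp : p.Prime)
    (hk : 1 ≤ k)
    [MulAction (DihedralGroup (2 * p ^ k)) S]
    [FaithfulSMul (DihedralGroup (2 * p ^ k)) S] :
    baseSize (DihedralGroup (2 * p ^ k)) S ≤ 3 := by
  have : NeZero p := ⟨hp.ne_zero⟩
  obtain ⟨x, hx⟩ := exists_smul_ne_of_ne_one (S := S) (r_two_mul_pow_pred_ne_one hp hk)
  exact baseSize_le_of_card_stabilizer_le x (m := 2) (card_stabilizer_le_four hp hx)

/-- For an odd prime `p` and `k ≥ 1`, every faithful action of the dihedral group of order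
`4 p ^ k` on a finite set has base size at most `3`. -/
theorem stmt9 (S : Type*) [Fintype S] (p k : ℕ) (hp : p.Prime) (hodd : Odd p)
    (hk : 1 ≤ k)
    [MulAction (DihedralGroup (2 * p ^ k)) S]
    [FaithfulSMul (DihedralGroup (2 * p ^ k)) S] :
    baseSize (DihedralGroup (2 * p ^ k)) S ≤ 3 :=
  stmt9_general S p k hp hk
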